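/- Let F satisfy the dilaton equation ∂F/∂t_1 = (∑_{n≥0} t_n ∂/∂t_n + 2ħ ∂/∂ħ − 2) F + ħ/24, and let F̃ = F + ∑_{g≥1} b_g ħ^g ε^g ∂^{2g}F/∂t_0^{2g} for constants b_g. Then F̃ satisfies the same dilaton equation: ∂F̃/∂t_1 = (∑_{n≥0} t_n ∂/∂t_n + 2ħ ∂/∂ħ − 2) F̃ + ħ/24. -/

import Mathlib

/-!
Write `D = ∑ tₙ ∂/∂tₙ + 2ħ ∂/∂ħ - 2` for the dilaton operator. Since `[∂/∂t₀, D] = ∂/∂t₀`, we get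
`∂^{2g}/∂t₀^{2g} ∘ D = (D + 2g) ∘ ∂^{2g}/∂t₀^{2g}`, and the factor `ħ^g` absorbs the shift `2g`
through `2ħ ∂/∂ħ`; so every term `ħ^g ∂^{2g}/∂t₀^{2g}` of the correction commutes with `D`. It also
commutes with `∂/∂t₁` and kills the constant `ħ/24`, so the correction solves `∂G/∂t₁ = D G`, and
adding it to `F` preserves the dilaton equation.
-/

/-- Power series in `ε`. -/
abbrev B := PowerSeries ℚ

/-- The coefficient ring `ℚ[[ħ, ε]]`, viewed as power series in `ħ` with
coefficients power series in `ε`. -/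
abbrev A := PowerSeries B

/-- The partial derivative `∂/∂t_n` on formal power series in `t_0, t_1, t_2, …`. -/
noncomputable def pd (n : ℕ) (F : MvPowerSeries ℕ A) : MvPowerSeries ℕ A :=
  fun m => ((m n + 1 : ℕ) : A) * F (m + Finsupp.single n 1)

/-- The Euler operator `F ↦ ∑_{n≥0} t_n ∂F/∂t_n` (it multiplies the coefficient of a
monomial by its total degree). -/
noncomputable def eulerSum (F : MvPowerSeries ℕ A) : MvPowerSeries ℕ A :=
  fun m => ((m.sum fun _ e => e : ℕ) : A) * F m

/-- The operator `2ħ ∂/∂ħ`, acting on the coefficients. -/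
noncomputable def twoHbarDHbar (F : MvPowerSeries ℕ A) : MvPowerSeries ℕ A :=
  fun m => 2 * PowerSeries.X * PowerSeries.derivativeFun (F m)

/-- The constant term `ħ/24` of the dilaton equation. -/
noncomputable def hbarOver24 : A := ((1 : ℚ) / 24) • PowerSeries.X

/-- The correction `∑_{g≥1} b_g ħ^g ε^g ∂^{2g}F/∂t_0^{2g}`; the factor `ħ^g` makes
the sum `ħ`-adically convergent, so it can be defined coefficientwise. -/
noncomputable def corr (b : ℕ → ℚ) (F : MvPowerSeries ℕ A) : MvPowerSeries ℕ A :=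
  fun m => PowerSeries.mk fun N => ∑ g ∈ Finset.Icc 1 N,
    b g • (PowerSeries.X ^ g * PowerSeries.coeff (R := B) (N - g) (((pd 0)^[2 * g] F) m))

open PowerSeries

namespace MvPowerSeries

variable {σ R : Type*} (d : σ →₀ ℕ)

lemma zero_apply [Semiring R] : (0 : MvPowerSeries σ R) d = 0 := rfl

lemma add_apply [Semiring R] (f g : MvPowerSeries σ R) : (f + g) d = f d + g d := rfl

lemma smul_apply [Semiring R] (a : R) (f : MvPowerSeries σ R) : (a • f) d = a * f d := rfl

end MvPowerSeries

lemma PowerSeries.derivativeFun_eq {R : Type*} [CommSemiring R] (f : R⟦X⟧) :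
    derivativeFun f = derivative R f := rfl

noncomputable def dilatonOp (G : MvPowerSeries ℕ A) : MvPowerSeries ℕ A :=
  eulerSum G + twoHbarDHbar G - (2 : A) • G

section

variable (n : ℕ) (G H : MvPowerSeries ℕ A)

lemma pd_add : pd n (G + H) = pd n G + pd n H := by
  funext m
  exact mul_add _ _ _

lemma pd_sub : pd n (G - H) = pd n G - pd n H := by
  funext m
  exact mul_sub _ _ _

lemma pd_smul (a : A) : pd n (a • G) = a • pd n G := by
  funext m
  exact mul_left_comm _ _ _

lemma pd_C (a : A) : pd n (MvPowerSeries.C a) = 0 := by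
  funext m
  have hm : m + Finsupp.single n 1 ≠ 0 := by simp
  change _ * MvPowerSeries.coeff _ (MvPowerSeries.C a) = 0
  rw [MvPowerSeries.coeff_C, if_neg hm, mul_zero]

lemma pd_comm (i j : ℕ) : pd i (pd j G) = pd j (pd i G) := by
  rcases eq_or_ne i j with rfl | hij
  · rfl
  funext m
  simp only [pd, Finsupp.add_apply, Finsupp.single_apply, if_neg hij, if_neg hij.symm, add_zero,
    add_right_comm m]
  ring

lemma iterate_pd_add (k : ℕ) : (pd n)^[k] (G + H) = (pd n)^[k] G + (pd n)^[k] H := by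
  induction k with
  | zero => rfl
  | succ k ih => simp only [Function.iterate_succ_apply', ih, pd_add]

lemma iterate_pd_C {k : ℕ} (hk : k ≠ 0) (a : A) : (pd n)^[k] (MvPowerSeries.C a) = 0 := by
  obtain ⟨k, rfl⟩ := Nat.exists_eq_succ_of_ne_zero hk
  rw [Function.iterate_succ_apply, pd_C]
  exact Function.iterate_fixed (by simpa using pd_C n 0) k

lemma pd_eulerSum : pd n (eulerSum G) = eulerSum (pd n G) + pd n G := by
  funext m
  have hdeg : ((m + Finsupp.single n 1).sum fun _ e => e) = (m.sum fun _ e => e) + 1 := by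
    rw [Finsupp.sum_add_index' (fun _ => rfl) (fun _ _ _ => rfl), Finsupp.sum_single_index rfl]
  simp only [MvPowerSeries.add_apply, pd, eulerSum, hdeg]
  push_cast
  ring

lemma pd_twoHbarDHbar : pd n (twoHbarDHbar G) = twoHbarDHbar (pd n G) := by
  funext m
  simp only [pd, twoHbarDHbar]
  rw [← nsmul_eq_mul, ← nsmul_eq_mul, derivativeFun_eq, derivativeFun_eq, map_nsmul]
  ring

lemma dilatonOp_apply (m : ℕ →₀ ℕ) :
    dilatonOp G m = eulerSum G m + twoHbarDHbar G m - 2 * G m := rfl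

lemma dilatonOp_add : dilatonOp (G + H) = dilatonOp G + dilatonOp H := by
  funext m
  simp only [MvPowerSeries.add_apply, dilatonOp_apply, eulerSum, twoHbarDHbar, derivativeFun_eq,
    map_add]
  ring

lemma pd_dilatonOp : pd n (dilatonOp G) = dilatonOp (pd n G) + pd n G := by
  rw [dilatonOp, dilatonOp, pd_sub, pd_add, pd_smul, pd_eulerSum, pd_twoHbarDHbar]
  abel

lemma iterate_pd_dilatonOp (k : ℕ) :
    (pd n)^[k] (dilatonOp G) = dilatonOp ((pd n)^[k] G) + (k : A) • (pd n)^[k] G := by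
  induction k with
  | zero => simp
  | succ k ih =>
    rw [Function.iterate_succ_apply', ih, pd_add, pd_smul, pd_dilatonOp,
      Function.iterate_succ_apply', Nat.cast_succ, add_smul, one_smul]
    abel

lemma coeff_eulerSum (m : ℕ →₀ ℕ) (N : ℕ) :
    coeff N (eulerSum G m) = ((m.sum fun _ e => e : ℕ) : B) * coeff N (G m) := by
  rw [eulerSum, ← nsmul_eq_mul, map_nsmul, nsmul_eq_mul]

lemma coeff_twoHbarDHbar (m : ℕ →₀ ℕ) (N : ℕ) :
    coeff N (twoHbarDHbar G m) = 2 * N * coeff N (G m) := by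
  have h : twoHbarDHbar G m = X * (2 * derivative B (G m)) := by
    rw [twoHbarDHbar, derivativeFun_eq]
    ring
  rcases N with _ | N
  · simp [h]
  · rw [h, coeff_succ_X_mul, two_mul, map_add, coeff_derivative]
    push_cast
    ring

lemma coeff_dilatonOp (m : ℕ →₀ ℕ) (N : ℕ) :
    coeff N (dilatonOp G m) = ((m.sum fun _ e => e : ℕ) + 2 * N - 2 : B) * coeff N (G m) := by
  rw [dilatonOp_apply, map_sub, map_add, coeff_eulerSum, coeff_twoHbarDHbar,
    two_mul (G m), map_add]
  ring

end

section

variable (b : ℕ → ℚ) (F G : MvPowerSeries ℕ A)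

lemma coeff_corr (m : ℕ →₀ ℕ) (N : ℕ) :
    coeff N (corr b F m) =
      ∑ g ∈ Finset.Icc 1 N, b g • (X ^ g * coeff (N - g) (((pd 0)^[2 * g] F) m)) :=
  coeff_mk _ _

lemma corr_add : corr b (F + G) = corr b F + corr b G := by
  funext m
  refine PowerSeries.ext fun N => ?_
  rw [MvPowerSeries.add_apply, map_add, coeff_corr, coeff_corr, coeff_corr,
    ← Finset.sum_add_distrib]
  refine Finset.sum_congr rfl fun g _ => ?_
  rw [iterate_pd_add, MvPowerSeries.add_apply, map_add, mul_add, smul_add]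

lemma corr_C (a : A) : corr b (MvPowerSeries.C a) = 0 := by
  funext m
  refine PowerSeries.ext fun N => ?_
  rw [coeff_corr]
  refine Finset.sum_eq_zero fun g hg => ?_
  have hg : 2 * g ≠ 0 := by grind
  rw [iterate_pd_C 0 hg, MvPowerSeries.zero_apply, map_zero, mul_zero, smul_zero]

lemma pd_corr (n : ℕ) : pd n (corr b F) = corr b (pd n F) := by
  funext m
  refine PowerSeries.ext fun N => ?_
  rw [pd, ← nsmul_eq_mul, map_nsmul, coeff_corr, coeff_corr, Finset.smul_sum]
  refine Finset.sum_congr rfl fun g _ => ?_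
  rw [Function.Commute.iterate_left (fun G => pd_comm G 0 n) (2 * g) F, pd,
    ← nsmul_eq_mul, map_nsmul, mul_smul_comm, smul_comm]

lemma corr_dilatonOp : corr b (dilatonOp F) = dilatonOp (corr b F) := by
  funext m
  refine PowerSeries.ext fun N => ?_
  rw [coeff_dilatonOp, coeff_corr, coeff_corr, Finset.mul_sum]
  refine Finset.sum_congr rfl fun g hg => ?_
  have hgN : g ≤ N := (Finset.mem_Icc.mp hg).2
  rw [iterate_pd_dilatonOp, MvPowerSeries.add_apply, MvPowerSeries.smul_apply, map_add,
    coeff_dilatonOp, ← nsmul_eq_mul, map_nsmul, nsmul_eq_mul, mul_smul_comm]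
  congr 1
  -- the `ħ`-degree drops from `N` to `N - g`, which exactly offsets the extra `2g`
  push_cast [Nat.cast_sub hgN]
  ring

end

/-- if `F` satisfies the dilaton equation
`∂F/∂t_1 = (∑_{n≥0} t_n ∂/∂t_n + 2ħ∂/∂ħ − 2)F + ħ/24`, then
`F̃ = F + ∑_{g≥1} b_g ħ^g ε^g ∂^{2g}F/∂t_0^{2g}` satisfies the same dilaton
equation. -/
theorem dilaton_equation_for_tilde_F (b : ℕ → ℚ) (F : MvPowerSeries ℕ A)
    (h : pd 1 F = eulerSum F + twoHbarDHbar F - (2 : A) • F +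
      MvPowerSeries.C (σ := ℕ) (R := A) hbarOver24) :
    pd 1 (F + corr b F) =
      eulerSum (F + corr b F) + twoHbarDHbar (F + corr b F) - (2 : A) • (F + corr b F) +
        MvPowerSeries.C (σ := ℕ) (R := A) hbarOver24 := by
  change pd 1 F = dilatonOp F + MvPowerSeries.C hbarOver24 at h
  have hcorr : pd 1 (corr b F) = dilatonOp (corr b F) := by
    rw [pd_corr, h, corr_add, corr_C, add_zero, corr_dilatonOp]
  change pd 1 (F + corr b F) = dilatonOp (F + corr b F) + MvPowerSeries.C hbarOver24
  rw [pd_add, h, hcorr, dilatonOp_add]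
  abel
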